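/- Let Ē, Ā be n×n selective structural patterns and Ā^λ = Ā − λĒ. Suppose there exist an ordering τ₁,…,τₙ of the columns of Ā^λ, positions 1 ≤ i₁ < ⋯ < i_{k'} ≤ n, and distinct rows r₁,…,r_{k'} such that Ā^λ_{r_t, τ_{i_t}} = × for every t and Ā^λ_{r_t, τ_s} = 0 for every s < i_t (the columns τ_{i₁},…,τ_{i_{k'}} are the pivot columns). Let J = {τ_s : s ∈ {1,…,n} ∖ {i₁,…,i_{k'}}} be the set of non-pivot columns. Then the dedicated output pattern C̄* = 𝕀_n^r(J), consisting of n − k' dedicated sensors measuring the states indexed by the non-pivot columns, renders (Ē, Ā, C̄*) SSSO. -/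

import Mathlib

/-!
Let `x` be a kernel vector of `A - λE` stacked on `C`, and run through the columns in the order
`τ`, from last to first. A pivot column `τ(i_t)` has the row `r_t` of `A - λE`, whose entry there
is a nonzero entry of `A` (the pattern `Ā^λ` has `×` only where `Ē` is zero) and whose entries
in all earlier columns vanish; a non-pivot column has its dedicated sensor row. Either way that
row, applied to `x`, forces `x` to vanish at the column once it vanishes at all later ones.
-/

inductive Pat : Type
  | zero : Pat
  | cross : Pat
  | any : Pat
deriving DecidableEq

/-- `X` is a realization of the selective structural pattern `Xbar`:
zero entries are zero, cross entries are nonzero, `any` entries are arbitrary. -/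
def IsRealization {α β F : Type*} [Zero F]
    (Xbar : Matrix α β Pat) (X : Matrix α β F) : Prop :=
  ∀ i j, (Xbar i j = Pat.zero → X i j = 0) ∧ (Xbar i j = Pat.cross → X i j ≠ 0)

/-- The complexification of a real matrix. -/
noncomputable def toC {α β : Type*} (X : Matrix α β ℝ) : Matrix α β ℂ :=
  X.map Complex.ofReal

/-- The pencil `A - λ E` is regular, i.e. `det (A - λ E)` is not identically zero. -/
def RegularPencil {n : ℕ} (E A : Matrix (Fin n) (Fin n) ℝ) : Prop :=
  ∃ μ : ℂ, (toC A - μ • toC E).det ≠ 0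

/-- Selective strong structural controllability. -/
def SSSC {n : ℕ} {p : Type*} [Fintype p]
    (Ebar Abar : Matrix (Fin n) (Fin n) Pat) (Bbar : Matrix (Fin n) p Pat) : Prop :=
  ∀ (E A : Matrix (Fin n) (Fin n) ℝ) (B : Matrix (Fin n) p ℝ),
    IsRealization Ebar E → IsRealization Abar A → RegularPencil E A →
    IsRealization Bbar B →
    ∀ lam : ℂ, (Matrix.fromCols (toC A - lam • toC E) (toC B)).rank = n

/-- Selective strong structural observability. -/
def SSSO {n : ℕ} {m : Type*} [Fintype m]
    (Ebar Abar : Matrix (Fin n) (Fin n) Pat) (Cbar : Matrix m (Fin n) Pat) : Prop :=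
  ∀ (E A : Matrix (Fin n) (Fin n) ℝ) (C : Matrix m (Fin n) ℝ),
    IsRealization Ebar E → IsRealization Abar A → RegularPencil E A →
    IsRealization Cbar C →
    ∀ lam : ℂ, (Matrix.fromRows (toC A - lam • toC E) (toC C)).rank = n

/-- A pattern with no `⊗` entries, i.e. a `{0,×}`-pattern. -/
def ZeroCross {α β : Type*} (X : Matrix α β Pat) : Prop :=
  ∀ i j, X i j ≠ Pat.any

/-- Number of `×` entries of a pattern. -/
def crossCount {α β : Type*} [Fintype α] [Fintype β] (X : Matrix α β Pat) : ℕ :=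
  ∑ i, ∑ j, if X i j = Pat.cross then 1 else 0

/-- The pattern `Ā - λ Ē`. -/
def patLam {n : ℕ} (Ebar Abar : Matrix (Fin n) (Fin n) Pat) :
    Matrix (Fin n) (Fin n) Pat :=
  Matrix.of fun i j =>
    match Abar i j, Ebar i j with
    | Pat.cross, Pat.zero => Pat.cross
    | Pat.zero, Pat.zero => Pat.zero
    | _, _ => Pat.any



open Matrix

lemma patLam_eq_zero {n : ℕ} {Ebar Abar : Matrix (Fin n) (Fin n) Pat} {i j : Fin n}
    (h : patLam Ebar Abar i j = Pat.zero) : Abar i j = Pat.zero ∧ Ebar i j = Pat.zero := by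
  cases hA : Abar i j <;> cases hE : Ebar i j <;> simp_all [patLam]

lemma patLam_eq_cross {n : ℕ} {Ebar Abar : Matrix (Fin n) (Fin n) Pat} {i j : Fin n}
    (h : patLam Ebar Abar i j = Pat.cross) : Abar i j = Pat.cross ∧ Ebar i j = Pat.zero := by
  cases hA : Abar i j <;> cases hE : Ebar i j <;> simp_all [patLam]

lemma IsRealization.toC {α β : Type*} {Xbar : Matrix α β Pat} {X : Matrix α β ℝ}
    (hX : IsRealization Xbar X) : IsRealization Xbar (toC X) := fun i j =>
  ⟨fun h => by simp [_root_.toC, (hX i j).1 h],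
    fun h => by simpa [_root_.toC] using (hX i j).2 h⟩

lemma IsRealization.fromRows {α α' β F : Type*} [Zero F]
    {P : Matrix α β Pat} {Q : Matrix α' β Pat} {X : Matrix α β F} {Y : Matrix α' β F}
    (hX : IsRealization P X) (hY : IsRealization Q Y) :
    IsRealization (fromRows P Q) (fromRows X Y) := by
  rintro (i | i) j
  · exact hX i j
  · exact hY i j

lemma isRealization_patLam {n : ℕ} {Ebar Abar : Matrix (Fin n) (Fin n) Pat}
    {E A : Matrix (Fin n) (Fin n) ℝ} (hE : IsRealization Ebar E) (hA : IsRealization Abar A)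
    (lam : ℂ) : IsRealization (patLam Ebar Abar) (toC A - lam • toC E) := by
  intro i j
  constructor
  · intro h
    obtain ⟨hA0, hE0⟩ := patLam_eq_zero h
    simp [toC, (hA i j).1 hA0, (hE i j).1 hE0]
  · intro h
    obtain ⟨hAc, hE0⟩ := patLam_eq_cross h
    simpa [toC, (hE i j).1 hE0] using (hA i j).2 hAc

lemma eq_zero_of_triangular_relations {R ι : Type*} [Semiring R] [NoZeroDivisors R]
    [Fintype ι] [LinearOrder ι] (y : ι → R)
    (h : ∀ s, ∃ c : ι → R, c s ≠ 0 ∧ (∀ s' < s, c s' = 0) ∧ ∑ s', c s' * y s' = 0) :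
    y = 0 := by
  suffices ∀ s, y s = 0 from funext this
  intro s
  induction s using WellFoundedGT.induction with
  | _ s ih =>
    obtain ⟨c, hcs, hlt, hsum⟩ := h s
    have hsingle : ∑ s', c s' * y s' = c s * y s := by
      refine Finset.sum_eq_single s (fun s' _ hne => ?_) (by simp)
      rcases hne.lt_or_gt with hs' | hs'
      · rw [hlt s' hs', zero_mul]
      · rw [ih s' hs', mul_zero]
    exact (mul_eq_zero.1 (hsingle ▸ hsum)).resolve_left hcs

lemma Matrix.rank_eq_of_forall_mulVec_eq_zero {ι K : Type*} [Fintype ι] [Field K] {n : ℕ}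
    (N : Matrix ι (Fin n) K) (h : ∀ x, N *ᵥ x = 0 → x = 0) : N.rank = n := by
  have hinj : Function.Injective N.mulVecLin :=
    LinearMap.ker_eq_bot.1 (ker_mulVecLin_eq_bot_iff.2 h)
  rw [rank, LinearMap.finrank_range_of_inj hinj, Module.finrank_fin_fun]

theorem rank_eq_of_isRealization_of_ramp {ι K : Type*} [Fintype ι] [Field K] {n : ℕ}
    {P : Matrix ι (Fin n) Pat} {N : Matrix ι (Fin n) K} (hN : IsRealization P N)
    (τ : Equiv.Perm (Fin n))
    (hramp : ∀ s, ∃ i, P i (τ s) = Pat.cross ∧ ∀ s' < s, P i (τ s') = Pat.zero) :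
    N.rank = n := by
  refine N.rank_eq_of_forall_mulVec_eq_zero fun x hx => ?_
  suffices x ∘ τ = 0 by ext j; simpa using congrFun this (τ.symm j)
  refine eq_zero_of_triangular_relations _ fun s => ?_
  obtain ⟨i, hcross, hzero⟩ := hramp s
  refine ⟨fun s' => N i (τ s'), (hN i _).2 hcross, fun s' hs' => (hN i _).1 (hzero s' hs'), ?_⟩
  simpa [mulVec, dotProduct] using
    (Equiv.sum_comp τ (fun j => N i j * x j)).trans (congrFun hx i)

theorem dedicated_solution_SSSO_general {n k' : ℕ}
    (Ebar Abar : Matrix (Fin n) (Fin n) Pat)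
    (τ : Equiv.Perm (Fin n))
    (ip : Fin k' → Fin n)
    (r : Fin k' → Fin n)
    (hpiv : ∀ t, patLam Ebar Abar (r t) (τ (ip t)) = Pat.cross)
    (hzero : ∀ (t : Fin k') (s : Fin n), s < ip t →
      patLam Ebar Abar (r t) (τ s) = Pat.zero) :
    SSSO Ebar Abar
      (Matrix.of fun s j : Fin n =>
        if (∀ t, ip t ≠ s) ∧ j = τ s then Pat.cross else Pat.zero) := by
  intro E A C hE hA _ hC lam
  refine rank_eq_of_isRealization_of_ramp ((isRealization_patLam hE hA lam).fromRows hC.toC) τ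
    fun s => ?_
  by_cases hpivot : ∃ t, ip t = s
  · obtain ⟨t, rfl⟩ := hpivot
    exact ⟨Sum.inl (r t), hpiv t, hzero t⟩
  · simp only [not_exists] at hpivot
    exact ⟨Sum.inr s, by simp [hpivot], fun s' hs' => by simp [τ.injective.ne hs'.ne]⟩

/-- given a (column-sided) ramp certificate of `Ā^λ` (column ordering `τ`,
pivot positions `ip`, pivot rows `r`), placing dedicated sensors at the non-pivot
columns `{τ s : s ∉ range ip}` (padded with zero rows) yields an SSSO triple. -/
theorem dedicated_solution_SSSO {n k' : ℕ}
    (Ebar Abar : Matrix (Fin n) (Fin n) Pat)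
    (τ : Equiv.Perm (Fin n))
    (ip : Fin k' → Fin n) (hip : StrictMono ip)
    (r : Fin k' → Fin n) (hr : Function.Injective r)
    (hpiv : ∀ t, patLam Ebar Abar (r t) (τ (ip t)) = Pat.cross)
    (hzero : ∀ (t : Fin k') (s : Fin n), s < ip t →
      patLam Ebar Abar (r t) (τ s) = Pat.zero) :
    SSSO Ebar Abar
      (Matrix.of fun s j : Fin n =>
        if (∀ t, ip t ≠ s) ∧ j = τ s then Pat.cross else Pat.zero) :=
  dedicated_solution_SSSO_general Ebar Abar τ ip r hpiv hzero
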